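/- Let u₂ ∈ S^{d-1}, g₂ ∈ ℝ^d, and η > 0 with η‖g₂‖₂ ≤ 1/2. Let v₂ = Proj_{S^{d-1}}(u₂ + η g₂) = (u₂ + η g₂)/‖u₂ + η g₂‖₂. Then ‖v₂ - u₂ - η(I_d - u₂u₂ᵀ)g₂‖₂ ≤ C η² ‖g₂‖₂² for an absolute constant C. -/

import Mathlib

/-! With `r = ‖u + w‖` and `a = ⟪u, w⟫`, the error is `(r⁻¹ - 1 + a) • u + (r⁻¹ - 1) • w`.
Since `|r - 1| ≤ ‖w‖ ≤ 1/2`, the second coefficient is `O(‖w‖)`; since `r² = 1 + 2a + ‖w‖²`,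
the identity `(r⁻¹ - 1 + a) r (1 + r) = a (r - 1)(r + 2) - ‖w‖²` makes the first one `O(‖w‖²)`.
For the gradient step take `w = η • g₂`. -/

open RealInnerProductSpace

lemma abs_inv_sub_one_le_of_abs_sub_one_le {r t : ℝ} (hr : |r - 1| ≤ t) (ht : t ≤ 1 / 2) :
    |r⁻¹ - 1| ≤ 2 * t := by
  have hr₀ : 1 / 2 ≤ r := by linarith [neg_abs_le (r - 1)]
  have hr_pos : 0 < r := by linarith
  rw [show r⁻¹ - 1 = -(r - 1) / r by field_simp; ring, abs_div, abs_neg,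
    abs_of_pos hr_pos, div_le_iff₀ hr_pos]
  nlinarith [abs_nonneg (r - 1)]

lemma abs_inv_sub_one_add_le {r a t : ℝ} (hr : |r - 1| ≤ t) (ht : t ≤ 1 / 2)
    (hr_sq : r ^ 2 = 1 + 2 * a + t ^ 2) (ha : |a| ≤ t) :
    |r⁻¹ - 1 + a| ≤ 6 * t ^ 2 := by
  have hr₁ := abs_le.mp hr
  have hr₀ : 0 < r := by linarith
  have hden : 3 / 4 ≤ r * (1 + r) := by nlinarith
  have hid : (r⁻¹ - 1 + a) * (r * (1 + r)) = a * (r - 1) * (r + 2) - t ^ 2 := by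
    field_simp
    linear_combination (-1 : ℝ) * hr_sq
  have hnum : |a * (r - 1) * (r + 2) - t ^ 2| ≤ 9 / 2 * t ^ 2 := by
    have : |a * (r - 1)| ≤ t * t := by
      rw [abs_mul]; exact mul_le_mul ha hr (abs_nonneg _) ((abs_nonneg a).trans ha)
    calc |a * (r - 1) * (r + 2) - t ^ 2|
        ≤ |a * (r - 1)| * |r + 2| + |t ^ 2| := by rw [← abs_mul]; exact abs_sub _ _
      _ ≤ t * t * (7 / 2) + t ^ 2 := by
        rw [abs_of_pos (by linarith : 0 < r + 2), abs_of_nonneg (sq_nonneg t)]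
        gcongr
        · exact (abs_nonneg _).trans this
        · linarith
      _ = 9 / 2 * t ^ 2 := by ring
  rw [← hid, abs_mul, abs_of_pos (by linarith : 0 < r * (1 + r))] at hnum
  nlinarith [abs_nonneg (r⁻¹ - 1 + a)]

section InnerProductSpace

variable {E : Type*} [NormedAddCommGroup E] [InnerProductSpace ℝ E]

theorem norm_normalize_add_sub_tangent_le {u w : E} (hu : ‖u‖ = 1) (hw : ‖w‖ ≤ 1 / 2) :
    ‖‖u + w‖⁻¹ • (u + w) - u - (w - ⟪u, w⟫ • u)‖ ≤ 8 * ‖w‖ ^ 2 := by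
  set r := ‖u + w‖
  set a := ⟪u, w⟫
  have hr : |r - 1| ≤ ‖w‖ := by simpa [hu] using abs_norm_sub_norm_le (u + w) u
  have hr_sq : r ^ 2 = 1 + 2 * a + ‖w‖ ^ 2 := by rw [norm_add_sq_real, hu]; ring
  have ha : |a| ≤ ‖w‖ := by simpa [hu] using abs_real_inner_le_norm u w
  calc ‖r⁻¹ • (u + w) - u - (w - a • u)‖
      = ‖(r⁻¹ - 1 + a) • u + (r⁻¹ - 1) • w‖ := by congr 1; module
    _ ≤ |r⁻¹ - 1 + a| + |r⁻¹ - 1| * ‖w‖ := by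
        refine (norm_add_le _ _).trans_eq ?_
        rw [norm_smul, norm_smul, hu, Real.norm_eq_abs, Real.norm_eq_abs, mul_one]
    _ ≤ 6 * ‖w‖ ^ 2 + 2 * ‖w‖ * ‖w‖ := by
        gcongr
        · exact abs_inv_sub_one_add_le hr hw hr_sq ha
        · exact abs_inv_sub_one_le_of_abs_sub_one_le hr hw
    _ = 8 * ‖w‖ ^ 2 := by ring

end InnerProductSpace

/-- One step of projected (sphere) gradient descent agrees with one
step of Riemannian gradient descent up to second order: for `‖u₂‖ = 1`, `η > 0`,
`η‖g₂‖ ≤ 1/2` and `v₂ = (u₂ + η g₂)/‖u₂ + η g₂‖`, one has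
`‖v₂ - u₂ - η (I - u₂u₂ᵀ) g₂‖ ≤ C η² ‖g₂‖²` for an absolute constant `C`. -/
theorem stmt14 : ∃ C : ℝ, 0 < C ∧
    ∀ (d : ℕ) (u₂ g₂ : EuclideanSpace ℝ (Fin d)) (η : ℝ),
      ‖u₂‖ = 1 → 0 < η → η * ‖g₂‖ ≤ 1 / 2 →
      ‖(‖u₂ + η • g₂‖⁻¹ • (u₂ + η • g₂)) - u₂
          - η • (g₂ - (inner ℝ u₂ g₂ : ℝ) • u₂)‖ ≤ C * η ^ 2 * ‖g₂‖ ^ 2 := by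
  refine ⟨8, by norm_num, fun d u g η hu hη hηg => ?_⟩
  have hw : ‖η • g‖ = η * ‖g‖ := by rw [norm_smul, Real.norm_of_nonneg hη.le]
  have key := norm_normalize_add_sub_tangent_le hu (hw ▸ hηg)
  rw [inner_smul_right, hw, ← smul_smul, ← smul_sub] at key
  linarith
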